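/- Let (L_1,…,L_{m−1}) ∈ Y_{m−1} with m ≤ N. Then the set of subspaces L_m ⊆ E such that (L_1,…,L_{m−1},L_m) ∈ Y_m is exactly the set of m-dimensional subspaces L_m with L_{m−1} ⊊ L_m ⊆ z^{-1}L_{m−1}, and the quotient z^{-1}L_{m−1}/L_{m−1} is two-dimensional; hence this set is in natural bijection with the set of complex lines in z^{-1}L_{m−1}/L_{m−1}. -/

import Mathlib

open scoped ComplexInnerProductSpace

noncomputable section

abbrev E (N : ℕ) := EuclideanSpace ℂ (Fin N ⊕ Fin N)

def zmap (N : ℕ) : E N →ₗ[ℂ] E N where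
  toFun v := WithLp.toLp 2 (fun i =>
    match i with
    | Sum.inl j => if h : (j : ℕ) + 1 < N then v (Sum.inl ⟨(j : ℕ) + 1, h⟩) else 0
    | Sum.inr j => if h : (j : ℕ) + 1 < N then v (Sum.inr ⟨(j : ℕ) + 1, h⟩) else 0)
  map_add' u v := by
    ext i
    rcases i with j | j <;> simp only [PiLp.add_apply] <;> split <;> simp
  map_smul' c v := by
    ext i
    rcases i with j | j <;> simp only [PiLp.smul_apply, RingHom.id_apply, smul_eq_mul] <;>
      split <;> simp

def Cmap (N : ℕ) : E N →ₗ[ℂ] EuclideanSpace ℂ (Fin 2) where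
  toFun v := WithLp.toLp 2 (fun i => if i = 0 then ∑ j : Fin N, v (Sum.inl j) else ∑ j : Fin N, v (Sum.inr j))
  map_add' u v := by
    ext i
    by_cases h : i = (0 : Fin 2) <;> simp [h, PiLp.add_apply, Finset.sum_add_distrib]
  map_smul' c v := by
    ext i
    by_cases h : i = (0 : Fin 2) <;> simp [h, PiLp.smul_apply, Finset.mul_sum]

/-- `Ym N m` : complete flags `0 = L_0 ⊊ L_1 ⊊ … ⊊ L_m` of `z`-stable subspaces of `E`
with `dim L_j = j`.  A tuple `(L_1,…,L_m) ∈ Y_m` is encoded as the function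
`L : Fin (m+1) → Submodule ℂ (E N)` with the convention `L 0 = 0`. -/
def Ym (N m : ℕ) : Set (Fin (m + 1) → Submodule ℂ (E N)) :=
  {L | L 0 = ⊥ ∧ StrictMono L ∧ (∀ j : Fin (m + 1), Module.finrank ℂ (L j) = (j : ℕ)) ∧
    ∀ j : Fin (m + 1), (L j).map (zmap N) ≤ L j}

/-- The map `φ_m`, in coordinates: `φ_m(L)_j = C(L_{j+1} ∩ L_j^⊥)` (0-based `j`),
i.e. the tuple `(C(L_1), C(L_2 ∩ L_1^⊥), …, C(L_m ∩ L_{m-1}^⊥))`. -/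
def phiRaw (N m : ℕ) (L : Fin (m + 1) → Submodule ℂ (E N)) :
    Fin m → Submodule ℂ (EuclideanSpace ℂ (Fin 2)) :=
  fun j => ((L j.succ) ⊓ (L j.castSucc)ᗮ).map (Cmap N)

/-- `X_{m,i} = {(L_1,…,L_m) ∈ Y_m : L_{i+1} = z^{-1}(L_{i-1})}` (with `L_0 = 0`). -/
def Xmi (N m i : ℕ) : Set (Fin (m + 1) → Submodule ℂ (E N)) :=
  {L | L ∈ Ym N m ∧ ∀ (h : i + 1 < m + 1) (h' : i - 1 < m + 1),
    L ⟨i + 1, h⟩ = (L ⟨i - 1, h'⟩).comap (zmap N)}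

/-- `A_{m,i} = {(l_1,…,l_m) ∈ (ℙ¹)^m : l_{i+1} = l_i^⊥}`; a point of `(ℙ¹)^m` is encoded
as a tuple of rank-one subspaces of `ℂ²`, the line `l_k` sitting at 0-based index `k-1`. -/
def Ami (m i : ℕ) : Set (Fin m → Submodule ℂ (EuclideanSpace ℂ (Fin 2))) :=
  {l | (∀ j, Module.finrank ℂ (l j) = 1) ∧
    ∀ (h : i < m) (h' : i - 1 < m), l ⟨i, h⟩ = (l ⟨i - 1, h'⟩)ᗮ}

/-- `q_{m,i}(L_1,…,L_m) = (L_1,…,L_{i-1}, zL_{i+2},…,zL_m)`. -/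
def qRaw (N m i : ℕ) (hm : 2 ≤ m) (L : Fin (m + 1) → Submodule ℂ (E N)) :
    Fin (m - 2 + 1) → Submodule ℂ (E N) :=
  fun j =>
    if (j : ℕ) < i then L ⟨(j : ℕ), by have := j.isLt; omega⟩
    else (L ⟨(j : ℕ) + 2, by have := j.isLt; omega⟩).map (zmap N)

/-- The forgetful map `g_{m,i}(l_1,…,l_m) = (l_1,…,l_{i-1}, l_{i+2},…,l_m)`. -/
def gRaw (m i : ℕ) (l : Fin m → Submodule ℂ (EuclideanSpace ℂ (Fin 2))) :
    Fin (m - 2) → Submodule ℂ (EuclideanSpace ℂ (Fin 2)) :=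
  fun k =>
    if (k : ℕ) + 1 < i then l ⟨(k : ℕ), by have := k.isLt; omega⟩
    else l ⟨(k : ℕ) + 2, by have := k.isLt; omega⟩

/-- The involution `I_{2n}` of `(ℙ¹)^m`: `l_j ↦ l_j` for `j` odd, `l_j ↦ l_j^⊥` for `j` even
(the line `l_j` sits at 0-based index `j-1`). -/
def Imap (m : ℕ) (l : Fin m → Submodule ℂ (EuclideanSpace ℂ (Fin 2))) :
    Fin m → Submodule ℂ (EuclideanSpace ℂ (Fin 2)) :=
  fun k => if (k : ℕ) % 2 = 0 then l k else (l k)ᗮ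

/-- A crossingless matching of the `2n` points `{1,…,2n}`: a partition of `{1,…,2n}` into
`n` pairs (each pair recorded as `(i,j)` with `i < j`) such that there is no quadruple
`i < j < k < l` with `(i,k)` and `(j,l)` paired. -/
structure CrossinglessMatching (n : ℕ) where
  pairs : Finset (ℕ × ℕ)
  card_eq : pairs.card = n
  lt : ∀ p ∈ pairs, p.1 < p.2
  mem_range : ∀ p ∈ pairs, 1 ≤ p.1 ∧ p.2 ≤ 2 * n
  cover : ∀ k, 1 ≤ k → k ≤ 2 * n → ∃! p, p ∈ pairs ∧ (p.1 = k ∨ p.2 = k)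
  noncross : ∀ i j k l : ℕ, i < j → j < k → k < l → (i, k) ∈ pairs → (j, l) ∉ pairs

/-- `{(L_1,…,L_m) ∈ Y_m : L_{s_a(j)} = z^{-d_a(j)} L_{j-1} for all j ∈ O_a}`, where for a
pair `(i,j)` of the matching, `s_a(i) = j`, `d_a(i) = (j-i+1)/2`, and `z^{-d}` is the
`d`-fold preimage under `z`. -/
def KaSet (N m : ℕ) (pairs : Finset (ℕ × ℕ)) : Set (Fin (m + 1) → Submodule ℂ (E N)) :=
  {L | L ∈ Ym N m ∧ ∀ p ∈ pairs,
    L (Fin.ofNat (m + 1) p.2) =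
      (L (Fin.ofNat (m + 1) (p.1 - 1 : ℕ))).comap ((zmap N) ^ ((p.2 - p.1 + 1) / 2))}

/-- `S_a = {(l_1,…,l_{2n}) ∈ (ℙ¹)^{2n} : l_{s_a(j)} = l_j ∀ j ∈ O_a}` (0-based indexing, so
`l_k` sits at index `k-1`). -/
def SaSet (m : ℕ) (pairs : Finset (ℕ × ℕ)) :
    Set (Fin m → Submodule ℂ (EuclideanSpace ℂ (Fin 2))) :=
  {l | (∀ j, Module.finrank ℂ (l j) = 1) ∧
    ∀ p ∈ pairs, ∀ (h2 : p.2 - 1 < m) (h1 : p.1 - 1 < m), l ⟨p.2 - 1, h2⟩ = l ⟨p.1 - 1, h1⟩}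

/-- `T_a = {(l_1,…,l_{2n}) ∈ (ℙ¹)^{2n} : l_{s_a(j)} = l_j^⊥ ∀ j ∈ O_a}`. -/
def TaSet (m : ℕ) (pairs : Finset (ℕ × ℕ)) :
    Set (Fin m → Submodule ℂ (EuclideanSpace ℂ (Fin 2))) :=
  {l | (∀ j, Module.finrank ℂ (l j) = 1) ∧
    ∀ p ∈ pairs, ∀ (h2 : p.2 - 1 < m) (h1 : p.1 - 1 < m), l ⟨p.2 - 1, h2⟩ = (l ⟨p.1 - 1, h1⟩)ᗮ}


/-!
Since `z` is nilpotent, a `z`-stable `L_m ⊋ L_{m-1}` of dimension one more satisfies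
`z L_m ⊆ L_{m-1}`: otherwise `L_m = L_{m-1} + z L_m`, and iterating gives
`L_m ⊆ L_{m-1} + z^k L_m = L_{m-1}` for large `k`. Conversely every `L_m` with
`L_{m-1} ⊊ L_m ⊆ z⁻¹ L_{m-1}` is stable. By Cayley–Hamilton, `z^{m-1}` kills the stable
`(m-1)`-dimensional `L_{m-1}`; as `m - 1 < N` this puts `L_{m-1}` inside `im z`, the vectors with
vanishing `e_N`, `f_N` coordinates. Hence `dim z⁻¹ L_{m-1} = (m - 1) + dim ker z = m + 1`, and
the `L_m` correspond to the lines of the plane `z⁻¹ L_{m-1} / L_{m-1}`.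
-/

open Module

section Nilpotent

variable {R M : Type*} [Ring R] [AddCommGroup M] [Module R M]

lemma Submodule.le_of_le_sup_map_of_isNilpotent {f : Module.End R M} (hf : IsNilpotent f)
    {P Q : Submodule R M} (hP : P.map f ≤ P) (h : Q ≤ P ⊔ Q.map f) : Q ≤ P := by
  have key : ∀ k : ℕ, Q ≤ P ⊔ Q.map (f ^ k) := by
    intro k
    induction k with
    | zero => simp [Module.End.one_eq_id]
    | succ k ih =>
      calc Q ≤ P ⊔ Q.map f := h
        _ ≤ P ⊔ (P ⊔ Q.map (f ^ k)).map f := by gcongr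
        _ = P ⊔ (P.map f ⊔ Q.map (f ^ (k + 1))) := by
          rw [Submodule.map_sup, pow_succ', Module.End.mul_eq_comp, Submodule.map_comp]
        _ ≤ P ⊔ Q.map (f ^ (k + 1)) := by
          rw [← sup_assoc, sup_eq_left.mpr hP]
  obtain ⟨k, hk⟩ := hf
  simpa [hk] using key k

variable {K V : Type*} [Field K] [AddCommGroup V] [Module K V] [FiniteDimensional K V]

lemma Submodule.map_le_of_isNilpotent_of_finrank_eq_succ {f : Module.End K V}
    (hf : IsNilpotent f) {P Q : Submodule K V} (hP : P.map f ≤ P) (hQ : Q.map f ≤ Q)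
    (hPQ : P < Q) (hrank : finrank K Q = finrank K P + 1) : Q.map f ≤ P := by
  have hlt : P ⊔ Q.map f < Q := by
    refine lt_of_le_of_ne (sup_le hPQ.le hQ) fun heq => hPQ.not_ge ?_
    exact Submodule.le_of_le_sup_map_of_isNilpotent hf hP heq.ge
  have hle := Submodule.finrank_lt_finrank_of_lt hlt
  have heq : P ⊔ Q.map f = P :=
    (Submodule.eq_of_le_of_finrank_le le_sup_left (by omega)).symm
  exact le_sup_right.trans heq.le

lemma Submodule.map_pow_finrank_eq_bot_of_isNilpotent {f : Module.End K V} (hf : IsNilpotent f)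
    {P : Submodule K V} (hP : P.map f ≤ P) : P.map (f ^ finrank K P) = ⊥ := by
  replace hP : Set.MapsTo f P P := fun x hx => hP ⟨x, hx, rfl⟩
  have hres : (f.restrict hP) ^ finrank K P = 0 := by
    simpa [(Module.End.isNilpotent.restrict hP hf).charpoly_eq_X_pow_finrank] using
      (f.restrict hP).aeval_self_charpoly
  rw [eq_bot_iff]
  rintro _ ⟨x, hx, rfl⟩
  have := congr(Subtype.val ($hres ⟨x, hx⟩))
  rwa [Module.End.pow_restrict _ hP, LinearMap.restrict_apply] at this

end Nilpotent

section Quotient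

variable {K V V' : Type*} [Field K] [AddCommGroup V] [Module K V] [FiniteDimensional K V]
  [AddCommGroup V'] [Module K V']

lemma Submodule.finrank_map_add_finrank_ker {f : V →ₗ[K] V'} {p : Submodule K V}
    (h : LinearMap.ker f ≤ p) :
    finrank K (p.map f) + finrank K (LinearMap.ker f) = finrank K p := by
  have := LinearMap.finrank_range_add_finrank_ker (f.domRestrict p)
  rwa [LinearMap.range_domRestrict, LinearMap.ker_domRestrict,
    (Submodule.comapSubtypeEquivOfLe h).finrank_eq] at this

lemma Submodule.finrank_comap_of_le_range {f : V →ₗ[K] V'}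
    {p : Submodule K V'} (h : p ≤ LinearMap.range f) :
    finrank K (p.comap f) = finrank K p + finrank K (LinearMap.ker f) := by
  rw [← Submodule.finrank_map_add_finrank_ker (LinearMap.ker_le_comap f),
    Submodule.map_comap_eq, inf_eq_right.mpr h]

variable {P W : Submodule K V}

lemma Submodule.finrank_quotient_comap_subtype_add (hPW : P ≤ W) :
    finrank K (W ⧸ P.comap W.subtype) + finrank K P = finrank K W := by
  rw [← (Submodule.comapSubtypeEquivOfLe hPW).finrank_eq]
  exact Submodule.finrank_quotient_add_finrank _

lemma Submodule.finrank_map_mkQ_comap_subtype (hPW : P ≤ W) {Q : Submodule K V} (hPQ : P ≤ Q)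
    (hQW : Q ≤ W) :
    finrank K ((Q.comap W.subtype).map (P.comap W.subtype).mkQ) + finrank K P =
      finrank K Q := by
  have := Submodule.finrank_map_add_finrank_ker (f := (P.comap W.subtype).mkQ)
    (p := Q.comap W.subtype) (by rw [Submodule.ker_mkQ]; exact Submodule.comap_mono hPQ)
  rwa [Submodule.ker_mkQ, (Submodule.comapSubtypeEquivOfLe hPW).finrank_eq,
    (Submodule.comapSubtypeEquivOfLe hQW).finrank_eq] at this

lemma Submodule.bijOn_map_mkQ_comap_subtype (hPW : P ≤ W) :
    Set.BijOn (fun Q : Submodule K V => (Q.comap W.subtype).map (P.comap W.subtype).mkQ)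
      {Q | finrank K Q = finrank K P + 1 ∧ P < Q ∧ Q ≤ W}
      {l | finrank K l = 1} := by
  set P' := P.comap W.subtype
  refine ⟨?mapsTo, ?injOn, ?surjOn⟩
  case mapsTo =>
    rintro Q ⟨hrank, hPQ, hQW⟩
    have := Submodule.finrank_map_mkQ_comap_subtype hPW hPQ.le hQW
    show finrank K ((Q.comap W.subtype).map (P.comap W.subtype).mkQ) = 1
    omega
  case injOn =>
    rintro Q₁ ⟨-, hPQ₁, hQ₁W⟩ Q₂ ⟨-, hPQ₂, hQ₂W⟩ heq
    have hcomap := congr(Submodule.comap P'.mkQ $heq)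
    simp only [Submodule.comap_map_mkQ] at hcomap
    rw [sup_eq_right.mpr (Submodule.comap_mono hPQ₁.le),
      sup_eq_right.mpr (Submodule.comap_mono hPQ₂.le)] at hcomap
    have hmap := congr(Submodule.map W.subtype $hcomap)
    rwa [Submodule.map_comap_subtype, Submodule.map_comap_subtype, inf_eq_right.mpr hQ₁W,
      inf_eq_right.mpr hQ₂W] at hmap
  case surjOn =>
    intro l hl
    set Q' := l.comap P'.mkQ
    have hPQ' : P' ≤ Q' := by
      rw [← Submodule.ker_mkQ P']
      exact Submodule.comap_mono bot_le
    have hmap : Q'.map P'.mkQ = l := by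
      rw [Submodule.map_comap_eq, Submodule.range_mkQ, top_inf_eq]
    have hcomap : (Q'.map W.subtype).comap W.subtype = Q' :=
      Submodule.comap_map_eq_of_injective W.injective_subtype Q'
    have hPQ : P ≤ Q'.map W.subtype := by
      simpa [P', Submodule.map_comap_subtype, inf_eq_right.mpr hPW] using
        Submodule.map_mono (f := W.subtype) hPQ'
    have hQW : Q'.map W.subtype ≤ W := Submodule.map_subtype_le W Q'
    have hrank := Submodule.finrank_map_mkQ_comap_subtype hPW hPQ hQW
    rw [hcomap, hmap, (hl : finrank K l = 1)] at hrank
    refine ⟨Q'.map W.subtype, ⟨by omega, lt_of_le_of_ne hPQ ?_, hQW⟩,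
      by simp only [hcomap, hmap]⟩
    intro hPQ'
    rw [← hPQ'] at hrank
    omega

end Quotient

section Shift

variable {N n : ℕ} {c : Fin N → Fin N ⊕ Fin N}

lemma zmap_apply (hc : c = Sum.inl ∨ c = Sum.inr) (v : E N) (j : Fin N) :
    zmap N v (c j) = if h : (j : ℕ) + 1 < N then v (c ⟨j + 1, h⟩) else 0 := by
  rcases hc with rfl | rfl <;> rfl

lemma zmap_pow_apply (hc : c = Sum.inl ∨ c = Sum.inr) (k : ℕ) (v : E N) (j : Fin N) :
    (zmap N ^ k) v (c j) = if h : (j : ℕ) + k < N then v (c ⟨j + k, h⟩) else 0 := by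
  induction k generalizing j with
  | zero => simp
  | succ k ih =>
    rw [pow_succ', Module.End.mul_apply, zmap_apply hc]
    by_cases h : (j : ℕ) + 1 < N
    · rw [dif_pos h, ih]
      simp only [add_assoc, add_comm 1 k]
    · rw [dif_neg h, dif_neg (by omega)]

lemma isNilpotent_zmap : IsNilpotent (zmap N) := by
  refine ⟨N, LinearMap.ext fun v => ?_⟩
  ext i
  rcases i with j | j
  · simpa using zmap_pow_apply (c := Sum.inl) (Or.inl rfl) N v j
  · simpa using zmap_pow_apply (c := Sum.inr) (Or.inr rfl) N v j

lemma zmap_apply_castSucc {c : Fin (n + 1) → Fin (n + 1) ⊕ Fin (n + 1)}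
    (hc : c = Sum.inl ∨ c = Sum.inr) (v : E (n + 1)) (j : Fin n) :
    zmap (n + 1) v (c j.castSucc) = v (c j.succ) := by
  simp [zmap_apply hc, Fin.succ]

lemma zmap_apply_last {c : Fin (n + 1) → Fin (n + 1) ⊕ Fin (n + 1)}
    (hc : c = Sum.inl ∨ c = Sum.inr) (v : E (n + 1)) :
    zmap (n + 1) v (c (Fin.last n)) = 0 := by
  simp [zmap_apply hc]

end Shift

/-- The coordinates of a vector along `e_N` and `f_N`. -/
def lastCoords (n : ℕ) : E (n + 1) →ₗ[ℂ] ℂ × ℂ :=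
  (EuclideanSpace.projₗ (Sum.inl (Fin.last n))).prod
    (EuclideanSpace.projₗ (Sum.inr (Fin.last n)))

lemma finrank_E (N : ℕ) : finrank ℂ (E N) = N + N := by
  simp

section LastCoords

variable {n : ℕ}

lemma lastCoords_apply (v : E (n + 1)) :
    lastCoords n v = (v (Sum.inl (Fin.last n)), v (Sum.inr (Fin.last n))) := rfl

lemma lastCoords_surjective : Function.Surjective (lastCoords n) := by
  intro ⟨a, b⟩
  refine ⟨EuclideanSpace.single (Sum.inl (Fin.last n)) a +
    EuclideanSpace.single (Sum.inr (Fin.last n)) b, ?_⟩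
  simp [lastCoords_apply]

lemma finrank_ker_lastCoords : finrank ℂ (LinearMap.ker (lastCoords n)) = 2 * n := by
  have := LinearMap.finrank_range_add_finrank_ker (lastCoords n)
  rw [LinearMap.range_eq_top.mpr lastCoords_surjective, finrank_top, finrank_prod, finrank_self,
    finrank_E] at this
  omega

lemma range_zmap_le_ker_lastCoords :
    LinearMap.range (zmap (n + 1)) ≤ LinearMap.ker (lastCoords n) := by
  rintro _ ⟨v, rfl⟩
  simp [lastCoords_apply, zmap_apply_last (c := Sum.inl) (Or.inl rfl),
    zmap_apply_last (c := Sum.inr) (Or.inr rfl)]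

lemma ker_zmap_pow_le_ker_lastCoords :
    LinearMap.ker (zmap (n + 1) ^ n) ≤ LinearMap.ker (lastCoords n) := by
  intro v hv
  have h₁ := zmap_pow_apply (c := Sum.inl) (Or.inl rfl) n v 0
  have h₂ := zmap_pow_apply (c := Sum.inr) (Or.inr rfl) n v 0
  simp_all [lastCoords_apply, Fin.last]

lemma ker_zmap_le_span :
    LinearMap.ker (zmap (n + 1)) ≤
      Submodule.span ℂ (Set.range ![EuclideanSpace.single (Sum.inl 0) 1,
        EuclideanSpace.single (Sum.inr 0) 1]) := by
  intro v hv
  rw [Submodule.mem_span_range_iff_exists_fun]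
  refine ⟨![v (Sum.inl 0), v (Sum.inr 0)], ?_⟩
  have htail : ∀ j : Fin n, v (Sum.inl j.succ) = 0 ∧ v (Sum.inr j.succ) = 0 := fun j => by
    rw [← zmap_apply_castSucc (c := Sum.inl) (Or.inl rfl),
      ← zmap_apply_castSucc (c := Sum.inr) (Or.inr rfl), LinearMap.mem_ker.mp hv]
    simp
  ext i
  rcases i with j | j <;> cases j using Fin.cases with
  | zero => simp
  | succ j => simp [Fin.sum_univ_two, htail j]

lemma finrank_ker_zmap_le : finrank ℂ (LinearMap.ker (zmap (n + 1))) ≤ 2 :=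
  (Submodule.finrank_mono ker_zmap_le_span).trans (finrank_range_le_card _)

lemma range_zmap : LinearMap.range (zmap (n + 1)) = LinearMap.ker (lastCoords n) := by
  refine Submodule.eq_of_le_of_finrank_le range_zmap_le_ker_lastCoords ?_
  have hrank := (zmap (n + 1)).finrank_range_add_finrank_ker
  rw [finrank_E] at hrank
  rw [finrank_ker_lastCoords]
  have := finrank_ker_zmap_le (n := n)
  omega

lemma finrank_ker_zmap : finrank ℂ (LinearMap.ker (zmap (n + 1))) = 2 := by
  have := (zmap (n + 1)).finrank_range_add_finrank_ker
  rw [range_zmap, finrank_ker_lastCoords, finrank_E] at this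
  omega

end LastCoords

lemma le_range_zmap_of_map_le {n : ℕ} {K : Submodule ℂ (E (n + 1))}
    (hK : K.map (zmap (n + 1)) ≤ K) (hdim : finrank ℂ K ≤ n) :
    K ≤ LinearMap.range (zmap (n + 1)) := by
  rw [range_zmap]
  intro v hv
  apply ker_zmap_pow_le_ker_lastCoords
  have hkill : (zmap (n + 1) ^ finrank ℂ K) v = 0 := by
    simpa [Submodule.map_pow_finrank_eq_bot_of_isNilpotent isNilpotent_zmap hK] using
      Submodule.mem_map_of_mem (f := zmap (n + 1) ^ finrank ℂ K) hv
  have hpow : zmap (n + 1) ^ n = zmap (n + 1) ^ (n - finrank ℂ K) *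
      zmap (n + 1) ^ finrank ℂ K := by
    rw [← pow_add, Nat.sub_add_cancel hdim]
  rw [LinearMap.mem_ker, hpow, Module.End.mul_apply, hkill, map_zero]

lemma snoc_mem_Ym_iff {N m : ℕ} {L : Fin (m + 1) → Submodule ℂ (E N)} (hL : L ∈ Ym N m)
    (Lm : Submodule ℂ (E N)) :
    Fin.snoc L Lm ∈ Ym N (m + 1) ↔
      finrank ℂ Lm = m + 1 ∧ L (Fin.last m) < Lm ∧ Lm.map (zmap N) ≤ Lm := by
  obtain ⟨h0, hmono, hrank, hstab⟩ := hL
  constructor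
  · rintro ⟨-, hmono', hrank', hstab'⟩
    have hrankLm := hrank' (Fin.last _)
    have hlt := hmono' (Fin.castSucc_lt_last (Fin.last m))
    have hstabLm := hstab' (Fin.last _)
    rw [Fin.snoc_last, Fin.val_last] at hrankLm
    rw [Fin.snoc_castSucc, Fin.snoc_last] at hlt
    rw [Fin.snoc_last] at hstabLm
    exact ⟨hrankLm, hlt, hstabLm⟩
  · rintro ⟨hrankLm, hlt, hstabLm⟩
    refine ⟨by rw [← Fin.castSucc_zero, Fin.snoc_castSucc, h0], ?_, ?_, ?_⟩
    · rw [Fin.strictMono_iff_lt_succ]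
      intro i
      cases i using Fin.lastCases with
      | last => rwa [Fin.succ_last, Fin.snoc_castSucc, Fin.snoc_last]
      | cast j =>
        rw [Fin.succ_castSucc, Fin.snoc_castSucc, Fin.snoc_castSucc]
        exact hmono Fin.castSucc_lt_succ
    · intro j
      cases j using Fin.lastCases with
      | last => rwa [Fin.snoc_last, Fin.val_last]
      | cast j => rw [Fin.snoc_castSucc, Fin.val_castSucc, hrank]
    · intro j
      cases j using Fin.lastCases with
      | last => rwa [Fin.snoc_last]
      | cast j => rw [Fin.snoc_castSucc]; exact hstab j

theorem fiber_description (N m' : ℕ) (hmN : m' + 1 ≤ N)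
    (L : Fin (m' + 1) → Submodule ℂ (E N)) (hL : L ∈ Ym N m') :
    ({Lm : Submodule ℂ (E N) | Fin.snoc L Lm ∈ Ym N (m' + 1)} =
      {Lm : Submodule ℂ (E N) | Module.finrank ℂ Lm = m' + 1 ∧
        L (Fin.last m') < Lm ∧ Lm ≤ (L (Fin.last m')).comap (zmap N)}) ∧
    Module.finrank ℂ
      (↥((L (Fin.last m')).comap (zmap N)) ⧸
        ((L (Fin.last m')).comap ((L (Fin.last m')).comap (zmap N)).subtype)) = 2 ∧
    Set.BijOn
      (fun Lm : Submodule ℂ (E N) =>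
        (Lm.comap ((L (Fin.last m')).comap (zmap N)).subtype).map
          ((L (Fin.last m')).comap ((L (Fin.last m')).comap (zmap N)).subtype).mkQ)
      {Lm : Submodule ℂ (E N) | Fin.snoc L Lm ∈ Ym N (m' + 1)}
      {l | Module.finrank ℂ l = 1} := by
  obtain ⟨n, rfl⟩ : ∃ n, N = n + 1 := ⟨N - 1, by omega⟩
  set K := L (Fin.last m')
  have hKz : K.map (zmap (n + 1)) ≤ K := hL.2.2.2 _
  have hKdim : finrank ℂ K = m' := by simpa using hL.2.2.1 (Fin.last m')
  have hKW : K ≤ K.comap (zmap (n + 1)) := Submodule.map_le_iff_le_comap.mp hKz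
  have hfiber : {Lm : Submodule ℂ (E (n + 1)) | Fin.snoc L Lm ∈ Ym (n + 1) (m' + 1)} =
      {Lm : Submodule ℂ (E (n + 1)) |
        finrank ℂ Lm = m' + 1 ∧ K < Lm ∧ Lm ≤ K.comap (zmap (n + 1))} := by
    ext Lm
    simp only [Set.mem_ofPred_eq, snoc_mem_Ym_iff hL, ← Submodule.map_le_iff_le_comap]
    refine and_congr_right fun hrank => and_congr_right fun hlt => ⟨fun hstab => ?_, ?_⟩
    · exact Submodule.map_le_of_isNilpotent_of_finrank_eq_succ isNilpotent_zmap hKz hstab hlt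
        (by rw [hrank, hKdim])
    · exact fun hmap => hmap.trans hlt.le
  have hWdim : finrank ℂ (K.comap (zmap (n + 1))) = m' + 2 := by
    rw [Submodule.finrank_comap_of_le_range (le_range_zmap_of_map_le hKz (by omega)),
      finrank_ker_zmap, hKdim]
  refine ⟨hfiber, ?_, ?_⟩
  · have := Submodule.finrank_quotient_comap_subtype_add hKW
    omega
  · rw [hfiber, ← hKdim]
    exact Submodule.bijOn_map_mkQ_comap_subtype hKW
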